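/- Let z ∈ ℂ and let {a_n}, {z_n} be an infinite continued fraction expansion and iteration sequence of z over the Eisenstein integers 𝔈 with respect to a nearest integer algorithm, with Q-pair {p_n}, {q_n}. If the sequence {|a_n|} is unbounded, then for every δ > 0 there exists n ≥ 0 such that |q_n|·|q_n·z − p_n| < δ; consequently z is not badly approximable with respect to 𝔈. -/

import Mathlib

/-!
With `Eₙ = qₙ z − pₙ`, the recurrences give `Eₙ₊₁ = −(zₙ − aₙ) Eₙ` and the determinant identity
`qₙ₊₁ Eₙ − qₙ Eₙ₊₁ = ±1`. Hence `xₙ = |qₙ| |Eₙ|` satisfies `xₙ₊₁ ≤ εₙ (εₙ xₙ + 1)` with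
`εₙ = |zₙ − aₙ| ≤ 2/3` (every point of `ℂ` lies within `√7/4` of `𝔈`), so `xₙ ≤ 2` and
`xₙ₊₁ ≤ 3 εₙ`. Since `εₙ = 1 / |zₙ₊₁|` and `|zₙ₊₁| ≥ |aₙ₊₁| − 2/3`, a large partial quotient
`aₙ₊₁` makes `xₙ₊₁` small.
-/

open Complex

/-- The primitive cube root of unity ω = (−1 + √3·i)/2. -/
noncomputable def eisOmega : ℂ := (-1 + Real.sqrt 3 * Complex.I) / 2

/-- `a : ℂ` is an Eisenstein integer: `a = x + y·ω` with `x, y ∈ ℤ`. -/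
def IsEis (a : ℂ) : Prop := ∃ x y : ℤ, a = (x : ℂ) + (y : ℂ) * eisOmega

lemma eisOmega_mul_self : eisOmega * eisOmega = -1 - eisOmega := by
  have h : (Real.sqrt 3 : ℂ) * Real.sqrt 3 = 3 := by
    exact_mod_cast Real.mul_self_sqrt (by norm_num : (0 : ℝ) ≤ 3)
  unfold eisOmega
  linear_combination (I * I * h + 3 * I_mul_I) / 4

def eisensteinSubring : Subring ℂ where
  carrier := {a | IsEis a}
  zero_mem' := ⟨0, 0, by simp⟩
  one_mem' := ⟨1, 0, by simp⟩
  add_mem' := by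
    rintro _ _ ⟨x, y, rfl⟩ ⟨u, v, rfl⟩
    exact ⟨x + u, y + v, by push_cast; ring⟩
  neg_mem' := by
    rintro _ ⟨x, y, rfl⟩
    exact ⟨-x, -y, by push_cast; ring⟩
  mul_mem' := by
    rintro _ _ ⟨x, y, rfl⟩ ⟨u, v, rfl⟩
    refine ⟨x * u - y * v, x * v + y * u - y * v, ?_⟩
    push_cast
    linear_combination (y * v : ℂ) * eisOmega_mul_self

lemma exists_isEis_norm_sub_le (w : ℂ) : ∃ b, IsEis b ∧ ‖w - b‖ ≤ 2 / 3 := by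
  have hs : (0 : ℝ) < Real.sqrt 3 := by positivity
  have hs2 : Real.sqrt 3 ^ 2 = 3 := Real.sq_sqrt (by norm_num)
  -- round the `ω`-coordinate first, then the real coordinate of what is left
  set y : ℤ := round (2 * w.im / Real.sqrt 3)
  set x : ℤ := round (w.re + y / 2)
  refine ⟨x + y * eisOmega, ⟨x, y, rfl⟩, ?_⟩
  have hre : |(w - (x + y * eisOmega)).re| ≤ 1 / 2 := by
    have h : (w - (x + y * eisOmega)).re = w.re + y / 2 - x := by simp [eisOmega]; ring
    exact h ▸ abs_sub_round _
  have him : |(w - (x + y * eisOmega)).im| ≤ Real.sqrt 3 / 4 := by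
    have h : (w - (x + y * eisOmega)).im = Real.sqrt 3 / 2 * (2 * w.im / Real.sqrt 3 - y) := by
      simp [eisOmega]; field_simp
    rw [h, abs_mul, abs_of_pos (by positivity)]
    nlinarith [abs_sub_round (2 * w.im / Real.sqrt 3)]
  rw [← Real.sqrt_sq (by norm_num : (0 : ℝ) ≤ 2 / 3), Complex.norm_def]
  refine Real.sqrt_le_sqrt ?_
  rw [Complex.normSq_apply]
  nlinarith [sq_abs (w - (x + y * eisOmega)).re, sq_abs (w - (x + y * eisOmega)).im,
    abs_nonneg (w - (x + y * eisOmega)).re, abs_nonneg (w - (x + y * eisOmega)).im]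

section Recurrence

variable {R : Type*} [CommRing R] {a x y : ℕ → R}

lemma Subring.mem_of_two_step_recurrence (S : Subring R) (ha : ∀ n, a n ∈ S)
    (hx : ∀ n, x (n + 2) = a (n + 1) * x (n + 1) + x n) (h0 : x 0 ∈ S) (h1 : x 1 ∈ S) :
    ∀ n, x n ∈ S :=
  Nat.twoStepInduction h0 h1 fun n hn hn1 ↦
    hx n ▸ S.add_mem (S.mul_mem (ha _) hn1) hn

lemma casoratian_of_two_step_recurrence
    (hx : ∀ n, x (n + 2) = a (n + 1) * x (n + 1) + x n)
    (hy : ∀ n, y (n + 2) = a (n + 1) * y (n + 1) + y n) (n : ℕ) :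
    x (n + 1) * y n - x n * y (n + 1) = (-1) ^ n * (x 1 * y 0 - x 0 * y 1) := by
  induction n with
  | zero => ring
  | succ n ih => rw [hx, hy, pow_succ]; linear_combination -ih

end Recurrence

lemma two_step_recurrence_eq_neg_sub_mul {K : Type*} [Field K] {a zs x : ℕ → K}
    (hx : ∀ n, x (n + 2) = a (n + 1) * x (n + 1) + x n) (hx1 : x 1 = -(zs 0 - a 0) * x 0)
    (hne : ∀ n, zs n ≠ a n) (hit : ∀ n, zs (n + 1) = (zs n - a n)⁻¹) (n : ℕ) :
    x (n + 1) = -(zs n - a n) * x n := by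
  induction n with
  | zero => exact hx1
  | succ n ih =>
    have hinv : (zs n - a n) * (zs n - a n)⁻¹ = 1 := mul_inv_cancel₀ (sub_ne_zero.mpr (hne n))
    rw [hx, ih, hit]
    linear_combination (-x n) * hinv

lemma norm_mul_norm_le_of_det {K : Type*} [NormedField K] {q₀ q₁ E₀ E₁ ε : K}
    (hdet : ‖q₁ * E₀ - q₀ * E₁‖ = 1) (hE : E₁ = -ε * E₀) :
    ‖q₁‖ * ‖E₁‖ ≤ ‖ε‖ * (‖ε‖ * (‖q₀‖ * ‖E₀‖) + 1) := by
  have hsplit : ‖q₁ * E₀‖ ≤ ‖q₀ * E₁‖ + 1 := by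
    simpa [hdet, add_comm] using norm_le_norm_add_norm_sub' (q₁ * E₀) (q₀ * E₁)
  calc ‖q₁‖ * ‖E₁‖ = ‖ε‖ * ‖q₁ * E₀‖ := by rw [hE]; simp only [norm_mul, norm_neg]; ring
    _ ≤ ‖ε‖ * (‖q₀ * E₁‖ + 1) := by gcongr
    _ = ‖ε‖ * (‖ε‖ * (‖q₀‖ * ‖E₀‖) + 1) := by rw [hE]; simp only [norm_mul, norm_neg]; ring

lemma le_three_mul_of_le_mul_add_one {x ε : ℕ → ℝ} (hx0 : x 0 ≤ 2)
    (hε0 : ∀ n, 0 ≤ ε n) (hε : ∀ n, ε n ≤ 2 / 3)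
    (hx : ∀ n, x (n + 1) ≤ ε n * (ε n * x n + 1)) (n : ℕ) :
    x (n + 1) ≤ 3 * ε n := by
  have hle : ∀ n, x n ≤ 2 := by
    intro n
    induction n with
    | zero => exact hx0
    | succ n ih => nlinarith [hx n, hε0 n, hε n, mul_le_mul_of_nonneg_left ih (hε0 n)]
  nlinarith [hx n, hε0 n, hε n, mul_le_mul_of_nonneg_left (hle n) (hε0 n)]

lemma norm_le_inv_of_norm_inv_sub_le {K : Type*} [NormedField K] {w b : K} {c : ℝ}
    (h : ‖w⁻¹ - b‖ ≤ c) (hb : c < ‖b‖) : ‖w‖ ≤ (‖b‖ - c)⁻¹ := by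
  rcases eq_or_ne w 0 with rfl | hw
  · simp only [norm_zero, inv_nonneg]; linarith
  have : ‖b‖ - c ≤ ‖w‖⁻¹ := by
    have := norm_sub_norm_le b (b - w⁻¹)
    rw [sub_sub_cancel, norm_inv, norm_sub_rev] at this
    linarith
  exact (le_inv_comm₀ (by linarith) (norm_pos_iff.mpr hw)).mp this

lemma exists_lt_succ_of_not_bddAbove {f : ℕ → ℝ} (hf : ¬ ∃ C, ∀ n, f n ≤ C) (C : ℝ) :
    ∃ n, C < f (n + 1) := by
  push Not at hf
  obtain ⟨_ | n, hn⟩ := hf (max C (f 0))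
  · exact absurd hn (le_max_right _ _).not_gt
  · exact ⟨n, (le_max_left _ _).trans_lt hn⟩

lemma exists_norm_sub_lt_of_not_bddAbove {K : Type*} [NormedField K] {a zs : ℕ → K} {c : ℝ}
    (hc : ∀ n, ‖zs n - a n‖ ≤ c) (hit : ∀ n, zs (n + 1) = (zs n - a n)⁻¹)
    (hunb : ¬ ∃ C, ∀ n, ‖a n‖ ≤ C) (η : ℝ) (hη : 0 < η) : ∃ n, ‖zs n - a n‖ < η := by
  obtain ⟨n, hn⟩ := exists_lt_succ_of_not_bddAbove hunb (η⁻¹ + c)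
  have hη' : 0 < η⁻¹ := inv_pos.mpr hη
  refine ⟨n, ?_⟩
  calc ‖zs n - a n‖ ≤ (‖a (n + 1)‖ - c)⁻¹ :=
        norm_le_inv_of_norm_inv_sub_le (hit n ▸ hc (n + 1)) (by linarith)
    _ < η⁻¹⁻¹ := by gcongr; linarith
    _ = η := inv_inv η

lemma not_badly_approximable_of_forall_exists_lt {K : Type*} [NormedField K] {P : K → Prop}
    {z : K} (h : ∀ δ : ℝ, 0 < δ → ∃ p q, P p ∧ P q ∧ q ≠ 0 ∧ ‖q‖ * ‖q * z - p‖ < δ) :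
    ¬ ∃ δ : ℝ, 0 < δ ∧ ∀ p q, P p → P q → q ≠ 0 → δ / ‖q‖ ^ 2 ≤ ‖z - p / q‖ := by
  rintro ⟨δ, hδ, hbad⟩
  obtain ⟨p, q, hp, hq, hq0, hlt⟩ := h δ hδ
  have hpos : 0 < ‖q‖ := norm_pos_iff.mpr hq0
  have hle := hbad p q hp hq hq0
  rw [show z - p / q = (q * z - p) / q by field_simp, norm_div,
    div_le_div_iff₀ (by positivity) hpos] at hle
  nlinarith

/-- If {|aₙ|} is unbounded, then for every δ > 0 there is n with
|qₙ|·|qₙ·z − pₙ| < δ; consequently z is not badly approximable with respect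
to 𝔈.  (Here `p (n+1)`, `q (n+1)` denote pₙ, qₙ.) -/
theorem eisenstein_cf_not_badly_approximable_of_unbounded
    (z : ℂ) (a zs : ℕ → ℂ)
    (ha : ∀ n, IsEis (a n))
    (hz0 : zs 0 = z)
    (hnear : ∀ n, ∀ b : ℂ, IsEis b → ‖zs n - a n‖ ≤ ‖zs n - b‖)
    (hne : ∀ n, zs n ≠ a n)
    (hit : ∀ n, zs (n + 1) = (zs n - a n)⁻¹)
    (p q : ℕ → ℂ)
    (hp0 : p 0 = 1) (hp1 : p 1 = a 0)
    (hprec : ∀ n, p (n + 2) = a (n + 1) * p (n + 1) + p n)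
    (hq0 : q 0 = 0) (hq1 : q 1 = 1)
    (hqrec : ∀ n, q (n + 2) = a (n + 1) * q (n + 1) + q n)
    (hqne : ∀ n, q (n + 1) ≠ 0)
    (hunb : ¬ ∃ C : ℝ, ∀ n : ℕ, ‖a n‖ ≤ C)
    :
    (∀ δ : ℝ, 0 < δ → ∃ n : ℕ,
        ‖q (n + 1)‖ * ‖q (n + 1) * z - p (n + 1)‖ < δ) ∧
    ¬ (∃ δ : ℝ, 0 < δ ∧ ∀ pp qq : ℂ, IsEis pp → IsEis qq → qq ≠ 0 →
        δ / ‖qq‖ ^ 2 ≤ ‖z - pp / qq‖) := by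
  have hε : ∀ n, ‖zs n - a n‖ ≤ 2 / 3 := fun n ↦
    let ⟨b, hb, hle⟩ := exists_isEis_norm_sub_le (zs n); (hnear n b hb).trans hle
  set E : ℕ → ℂ := fun n ↦ q n * z - p n
  have hE : ∀ n, E (n + 2) = a (n + 1) * E (n + 1) + E n := by
    intro n; simp only [E, hprec, hqrec]; ring
  have hrem :=
    two_step_recurrence_eq_neg_sub_mul hE (by simp [E, hp0, hp1, hq0, hq1, hz0]) hne hit
  have hdet : ∀ n, ‖q (n + 1) * E n - q n * E (n + 1)‖ = 1 := fun n ↦ by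
    rw [casoratian_of_two_step_recurrence hqrec hE]; simp [E, hp0, hq0, hq1]
  have hsmall : ∀ n, ‖q (n + 1)‖ * ‖E (n + 1)‖ ≤ 3 * ‖zs n - a n‖ :=
    le_three_mul_of_le_mul_add_one (x := fun n ↦ ‖q n‖ * ‖E n‖) (by simp [hq0])
      (fun _ ↦ norm_nonneg _) hε
      fun n ↦ norm_mul_norm_le_of_det (hdet n) (hrem n)
  have happrox : ∀ δ : ℝ, 0 < δ → ∃ n, ‖q (n + 1)‖ * ‖E (n + 1)‖ < δ := fun δ hδ ↦
    let ⟨n, hn⟩ := exists_norm_sub_lt_of_not_bddAbove hε hit hunb (δ / 3) (by positivity)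
    ⟨n, by linarith [hsmall n]⟩
  have hp := eisensteinSubring.mem_of_two_step_recurrence ha hprec
    (hp0 ▸ one_mem _) (hp1 ▸ ha 0)
  have hq := eisensteinSubring.mem_of_two_step_recurrence ha hqrec
    (hq0 ▸ zero_mem _) (hq1 ▸ one_mem _)
  refine ⟨happrox, not_badly_approximable_of_forall_exists_lt fun δ hδ ↦ ?_⟩
  obtain ⟨n, hn⟩ := happrox δ hδ
  exact ⟨p (n + 1), q (n + 1), hp _, hq _, hqne n, hn⟩
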